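/- With the orbit formula (T(s)0)(u) = f(u−s) for u ≥ 0 and (T(s)0)(−1) = 0, the Cesàro means of the orbit of 0 converge to 0 in norm: lim_{t→∞} ‖(1/t) ∫₀ᵗ T(s)0 ds‖ = 0; indeed ‖(1/t) ∫₀ᵗ T(s)0 ds‖ ≤ 2/t for t ≥ 2. -/

import Mathlib

/-!
The orbit `s ↦ T(s)0` is `1`-Lipschitz into `E`, so it is Bochner integrable and its integral
can be evaluated pointwise. At `u = -1` the integrand vanishes; at `u ≥ 0` it is the tent
`s ↦ f (u - s)`, of height `1` and supported in `[u, u + 2]`, so `∫₀ᵗ f (u - s) ds ≤ 2`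
uniformly in `u` and `t`. Hence `‖∫₀ᵗ T(s)0 ds‖ ≤ 2`, and the Cesàro means are `O(1/t)`.
-/

open MeasureTheory intervalIntegral Filter

noncomputable section

def Omega : Set ℝ := {-1} ∪ Set.Ici 0

abbrev E := BoundedContinuousFunction (↥Omega) ℝ

def f (u : ℝ) : ℝ :=
  if 0 ≤ u then 0 else if -1 ≤ u then -u else if -2 ≤ u then u + 2 else 0

namespace BoundedContinuousFunction

variable {α β : Type*} [TopologicalSpace α]

theorem lipschitzWith_of_forall_apply [PseudoMetricSpace β] {K : NNReal} {g : ℝ → α →ᵇ β}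
    (h : ∀ x, LipschitzWith K fun s => g s x) : LipschitzWith K g :=
  LipschitzWith.of_dist_le_mul fun s s' =>
    (dist_le (by positivity)).2 fun x => (h x).dist_le_mul s s'

variable [NormedAddCommGroup β] [NormedSpace ℝ β] [CompleteSpace β]

theorem intervalIntegral_apply {g : ℝ → α →ᵇ β} {a b : ℝ}
    (hg : IntervalIntegrable g volume a b) (x : α) :
    (∫ s in a..b, g s) x = ∫ s in a..b, g s x :=
  ((evalCLM ℝ x).intervalIntegral_comp_comm hg).symm

theorem norm_intervalIntegral_le_of_forall {g : ℝ → α →ᵇ β} {a b C : ℝ}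
    (hg : IntervalIntegrable g volume a b) (hC : 0 ≤ C)
    (h : ∀ x, ‖∫ s in a..b, g s x‖ ≤ C) : ‖∫ s in a..b, g s‖ ≤ C :=
  (norm_le hC).2 fun x => by simpa only [intervalIntegral_apply hg x] using h x

end BoundedContinuousFunction

theorem f_eq_max_min (u : ℝ) : f u = max 0 (min (-u) (u + 2)) := by
  unfold f
  split_ifs <;> rcases le_total (-u) (u + 2) with h | h <;>
    simp only [max_def, min_def] <;> split_ifs <;> linarith

theorem lipschitzWith_f : LipschitzWith 1 f := by
  simpa only [funext f_eq_max_min, max_self, Pi.neg_apply, id] using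
    (LipschitzWith.id.neg.min (isometry_add_right (2 : ℝ)).lipschitz).const_max 0

theorem f_nonneg (u : ℝ) : 0 ≤ f u := by
  rw [f_eq_max_min]
  exact le_max_left _ _

theorem f_le_one (u : ℝ) : f u ≤ 1 := by
  unfold f
  split_ifs <;> linarith

theorem f_eq_zero_of_notMem_Icc {u : ℝ} (hu : u ∉ Set.Icc (-2) 0) : f u = 0 := by
  rw [Set.mem_Icc, not_and_or, not_le, not_le] at hu
  unfold f
  rcases hu with hu | hu <;> split_ifs <;> first | rfl | linarith

theorem f_sub_le_indicator (c s : ℝ) : f (c - s) ≤ (Set.Icc c (c + 2)).indicator 1 s := by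
  by_cases hs : s ∈ Set.Icc c (c + 2)
  · simpa only [Set.indicator_of_mem hs, Pi.one_apply] using f_le_one _
  · rw [Set.indicator_of_notMem hs, f_eq_zero_of_notMem_Icc]
    contrapose! hs
    constructor <;> linarith [hs.1, hs.2]

theorem intervalIntegral_f_sub_le (c : ℝ) {a b : ℝ} (hab : a ≤ b) :
    ∫ s in a..b, f (c - s) ≤ 2 := by
  have hind : Integrable ((Set.Icc c (c + 2)).indicator (1 : ℝ → ℝ)) :=
    (integrable_indicator_iff measurableSet_Icc).2 (integrableOn_const (by simp))
  calc ∫ s in a..b, f (c - s)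
      ≤ ∫ s in a..b, (Set.Icc c (c + 2)).indicator 1 s :=
        integral_mono_on hab
          ((lipschitzWith_f.continuous.comp (continuous_sub_left c)).intervalIntegrable a b)
          hind.intervalIntegrable (fun s _ => f_sub_le_indicator c s)
    _ = ∫ s in Set.Ioc a b, (Set.Icc c (c + 2)).indicator 1 s := integral_of_le hab
    _ ≤ ∫ s, (Set.Icc c (c + 2)).indicator 1 s :=
        setIntegral_le_integral hind (.of_forall fun s => Set.indicator_nonneg (by simp) s)
    _ = 2 := by simp [MeasureTheory.integral_indicator measurableSet_Icc]

theorem orbit_lipschitzWith (g : ℝ → E)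
    (hg1 : ∀ s : ℝ, ∀ u : ↥Omega, (u : ℝ) = -1 → g s u = 0)
    (hg2 : ∀ s : ℝ, ∀ u : ↥Omega, (0:ℝ) ≤ (u : ℝ) → g s u = f ((u : ℝ) - s)) :
    LipschitzWith 1 g := by
  refine BoundedContinuousFunction.lipschitzWith_of_forall_apply fun u => ?_
  rcases u.2 with hu | hu
  · simpa only [hg1 _ u hu] using LipschitzWith.const' (α := ℝ) (0 : ℝ)
  · simpa only [hg2 _ u hu, one_mul, Function.comp_def, IsometryEquiv.subLeft_apply] using
      lipschitzWith_f.comp (IsometryEquiv.subLeft (u : ℝ)).isometry.lipschitz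

theorem norm_integral_orbit_le (g : ℝ → E)
    (hg1 : ∀ s : ℝ, ∀ u : ↥Omega, (u : ℝ) = -1 → g s u = 0)
    (hg2 : ∀ s : ℝ, ∀ u : ↥Omega, (0:ℝ) ≤ (u : ℝ) → g s u = f ((u : ℝ) - s))
    {t : ℝ} (ht : 0 ≤ t) : ‖∫ s in (0:ℝ)..t, g s‖ ≤ 2 := by
  refine BoundedContinuousFunction.norm_intervalIntegral_le_of_forall
    ((orbit_lipschitzWith g hg1 hg2).continuous.intervalIntegrable 0 t) zero_le_two fun u => ?_
  rcases u.2 with hu | hu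
  · simp [hg1 _ u hu]
  · simp only [hg2 _ u hu]
    rw [Real.norm_of_nonneg (integral_nonneg ht fun s _ => f_nonneg _)]
    exact intervalIntegral_f_sub_le _ ht

/-- if `g s = T(s)0`, i.e. `(g s)(−1) = 0` and `(g s)(u) = f(u−s)`
for `u ≥ 0`, then the Cesàro means of the orbit of `0` converge to `0` in norm,
and indeed `‖(1/t) ∫₀ᵗ g s ds‖ ≤ 2/t` for `t ≥ 2`. -/
theorem stmt_15 (g : ℝ → E)
    (hg1 : ∀ s : ℝ, ∀ u : ↥Omega, (u : ℝ) = -1 → g s u = 0)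
    (hg2 : ∀ s : ℝ, ∀ u : ↥Omega, (0:ℝ) ≤ (u : ℝ) → g s u = f ((u : ℝ) - s)) :
    (∀ t ≥ (2:ℝ), ‖(1 / t) • ∫ s in (0:ℝ)..t, g s‖ ≤ 2 / t) ∧
    Tendsto (fun t : ℝ => ‖(1 / t) • ∫ s in (0:ℝ)..t, g s‖) atTop (nhds 0) := by
  have hbound : ∀ t ≥ (2:ℝ), ‖(1 / t) • ∫ s in (0:ℝ)..t, g s‖ ≤ 2 / t := by
    intro t ht
    rw [norm_smul, Real.norm_of_nonneg (by positivity), one_div_mul_eq_div]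
    gcongr
    exact norm_integral_orbit_le g hg1 hg2 (by linarith)
  refine ⟨hbound, squeeze_zero' (.of_forall fun t => norm_nonneg _)
    ((eventually_ge_atTop 2).mono hbound) ?_⟩
  exact tendsto_const_nhds.div_atTop tendsto_id
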